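/- Fix r ≥ 2 and n = w(r−1)+1 with w ≥ 1. Among all r-furcating rooted tree shapes with n leaves and uniform leaf weight vector of all ones, the Huffman algorithm produces a unique tree shape: any two trees constructed by the algorithm (making arbitrary choices when multiple minimal-weight r-sets exist) have the same unlabeled topology. -/

import Mathlib

/-- Rooted trees with unlabeled leaves: a tree is a leaf or a list of subtrees. -/
inductive RTree : Type
  | leaf : RTree
  | node : List RTree → RTree

namespace RTree

/-- Number of leaves of a rooted tree. -/
def leaves : RTree → ℕ
  | leaf => 1
  | node ts => (ts.attach.map (fun ⟨t, _⟩ => leaves t)).sum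
decreasing_by
  have := List.sizeOf_lt_of_mem ‹_›
  simp only [RTree.node.sizeOf_spec]
  omega

/-- Multiset of values `m(v)` (number of descendant leaves) over internal nodes `v`. -/
def weights : RTree → Multiset ℕ
  | leaf => 0
  | node ts => leaves (node ts) ::ₘ (ts.attach.map (fun ⟨t, _⟩ => weights t)).sum
decreasing_by
  have := List.sizeOf_lt_of_mem ‹_›
  simp only [RTree.node.sizeOf_spec]
  omega

/-- A tree is (strictly) r-furcating if every internal node has exactly r children. -/
inductive IsRFurcating (r : ℕ) : RTree → Prop
  | leaf : IsRFurcating r .leaf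
  | node (ts : List RTree) (hlen : ts.length = r)
      (hts : ∀ t ∈ ts, IsRFurcating r t) : IsRFurcating r (.node ts)

/-- The number of labeled histories of (any labeling of) an r-furcating tree,
via the recursion `N(T) = multinomial(w−1; w₁,…,w_r) ∏ N(Tᵢ)` where
`wᵢ = (|Tᵢ|−1)/(r−1)` and `w − 1 = ∑ wᵢ`. -/
def NLH (r : ℕ) : RTree → ℕ
  | leaf => 1
  | node ts =>
      (Nat.factorial ((ts.map (fun t => (leaves t - 1) / (r - 1))).sum) /
        (ts.map (fun t => Nat.factorial ((leaves t - 1) / (r - 1)))).prod) *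
      (ts.attach.map (fun ⟨t, _⟩ => NLH r t)).prod
decreasing_by
  have := List.sizeOf_lt_of_mem ‹_›
  simp only [RTree.node.sizeOf_spec]
  omega

/-- Shape equality of rooted trees: same unlabeled topology, i.e., children
lists agree up to permutation and recursive shape equality. -/
inductive SameShape : RTree → RTree → Prop
  | leaf : SameShape .leaf .leaf
  | node {l₁ l₂ l₃ : List RTree} :
      List.Forall₂ SameShape l₁ l₂ → l₂.Perm l₃ → SameShape (.node l₁) (.node l₃)

end RTree

namespace RTree

/-- One step of the r-ary Huffman algorithm on a multiset of already-built
trees: merge `r` trees of minimal weight into a new node (with all-ones initial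
leaf weights, the weight of a tree is its number of leaves). -/
inductive HuffStep (r : ℕ) : Multiset RTree → Multiset RTree → Prop
  | step (l : List RTree) (rest : Multiset RTree) (hlen : l.length = r)
      (hmin : ∀ a ∈ l, ∀ b ∈ rest, leaves a ≤ leaves b) :
      HuffStep r ((l : Multiset RTree) + rest) (RTree.node l ::ₘ rest)

/-- `T` is an H-tree on `n` leaves for the uniform all-ones weight vector:
it can be produced by repeatedly merging `r` minimal-weight nodes starting
from `n` leaves. -/
def IsHTree (r n : ℕ) (T : RTree) : Prop :=
  Relation.ReflTransGen (HuffStep r) (Multiset.replicate n RTree.leaf) {T}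

/-- The fully symmetric r-furcating tree on `r^k` leaves. -/
def fullSym (r : ℕ) : ℕ → RTree
  | 0 => .leaf
  | k + 1 => .node (List.replicate r (fullSym r k))

end RTree

/-!
Only weights matter when choosing which trees to merge, so the multiset of weights of the pool
after `k` merges is the same for every run of the algorithm. In particular the root's children
in two H-trees on `n` leaves have the same multiset of leaf counts. Every subtree of an H-tree is
itself an H-tree on its own leaf count, so by induction on the tree, children with equal leaf
counts have the same shape, and matching them gives the same shape at the root.
-/

theorem List.exists_forall₂_perm_of_perm_map {α β : Type*} {R : α → α → Prop} {f : α → β} :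
    ∀ {l l' : List α}, (l.map f).Perm (l'.map f) → (∀ a ∈ l, ∀ b ∈ l', f a = f b → R a b) →
      ∃ l₂, List.Forall₂ R l l₂ ∧ l₂.Perm l'
  | [], l', hperm, _ => ⟨[], .nil, by simpa using hperm.symm⟩
  | a :: l, l', hperm, hR => by
    obtain ⟨b, hb, hba⟩ := List.mem_map.1 (hperm.subset (List.mem_cons_self ..))
    obtain ⟨s, t, rfl⟩ := List.append_of_mem hb
    have hrest : (l.map f).Perm ((s ++ t).map f) := by
      have := hperm.trans (List.perm_middle.map f)
      rw [List.map_cons, List.map_cons, hba] at this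
      simpa using this.cons_inv
    obtain ⟨l₂, hl₂, hl₂perm⟩ := List.exists_forall₂_perm_of_perm_map hrest
      fun x hx y hy => hR x (List.mem_cons_of_mem _ hx) y (by simp at hy ⊢; tauto)
    exact ⟨b :: l₂, .cons (hR a (List.mem_cons_self ..) b hb hba.symm) hl₂,
      (hl₂perm.cons b).trans List.perm_middle.symm⟩

theorem Multiset.sort_add_of_forall_le {α : Type*} [LinearOrder α] {A B : Multiset α}
    (h : ∀ a ∈ A, ∀ b ∈ B, a ≤ b) :
    (A + B).sort (· ≤ ·) = A.sort (· ≤ ·) ++ B.sort (· ≤ ·) := by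
  refine List.Perm.eq_of_pairwise' (Multiset.pairwise_sort _ _) ?_ ?_
  · exact List.pairwise_append.2 ⟨Multiset.pairwise_sort _ _, Multiset.pairwise_sort _ _,
      fun a ha b hb => h a ((Multiset.mem_sort _).1 ha) b ((Multiset.mem_sort _).1 hb)⟩
  · rw [← Multiset.coe_eq_coe, ← Multiset.coe_add, Multiset.sort_eq, Multiset.sort_eq,
      Multiset.sort_eq]

namespace RTree

theorem leaves_node (ts : List RTree) : leaves (.node ts) = (ts.map leaves).sum := by
  rw [leaves]
  exact congrArg List.sum (List.attach_map_val (l := ts) (f := leaves))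

/-- The step `HuffStep` seen on weights only, where it is deterministic. -/
def huffmanMerge (r : ℕ) (W : Multiset ℕ) : Multiset ℕ :=
  ((W.sort (· ≤ ·)).take r).sum ::ₘ ((W.sort (· ≤ ·)).drop r : Multiset ℕ)

variable {r n : ℕ}

namespace HuffStep

theorem map_leaves {M N : Multiset RTree} (h : HuffStep r M N) :
    N.map leaves = huffmanMerge r (M.map leaves) := by
  obtain ⟨l, rest, hlen, hmin⟩ := h
  have hsort : ((l + rest : Multiset RTree).map leaves).sort (· ≤ ·) =
      ((l.map leaves : List ℕ) : Multiset ℕ).sort (· ≤ ·) ++ (rest.map leaves).sort (· ≤ ·) := by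
    rw [Multiset.map_add, Multiset.map_coe]
    refine Multiset.sort_add_of_forall_le fun a ha b hb => ?_
    obtain ⟨t, ht, rfl⟩ := List.mem_map.1 (Multiset.mem_coe.1 ha)
    obtain ⟨u, hu, rfl⟩ := Multiset.mem_map.1 hb
    exact hmin t ht u hu
  have hlen' : (((l.map leaves : List ℕ) : Multiset ℕ).sort (· ≤ ·)).length = r := by
    simp [hlen]
  rw [huffmanMerge, hsort, ← hlen', List.take_left, List.drop_left, ← Multiset.sum_coe,
    Multiset.sort_eq, Multiset.sort_eq, Multiset.map_cons, leaves_node, Multiset.sum_coe]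

theorem card_add_one {M N : Multiset RTree} (h : HuffStep r M N) :
    Multiset.card M + 1 = Multiset.card N + r := by
  obtain ⟨l, rest, hlen, -⟩ := h
  simp only [Multiset.card_add, Multiset.coe_card, Multiset.card_cons, hlen]
  omega

theorem eq_node_of_singleton {M : Multiset RTree} {T : RTree} (h : HuffStep r M {T}) :
    ∃ l : List RTree, l.length = r ∧ M = l ∧ T = .node l := by
  generalize hN : ({T} : Multiset RTree) = N at h
  obtain ⟨l, rest, hlen, -⟩ := h
  obtain ⟨rfl, rfl⟩ : RTree.node l = T ∧ rest = 0 := by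
    simpa [eq_comm] using Multiset.cons_eq_cons.1 (hN.trans (Multiset.singleton_add _ _))
  exact ⟨l, hlen, by simp, rfl⟩

end HuffStep

def IsHuffPool (r n : ℕ) (M : Multiset RTree) : Prop :=
  Relation.ReflTransGen (HuffStep r) (Multiset.replicate n .leaf) M

namespace IsHuffPool

theorem exists_iterate (hr : 1 ≤ r) {M : Multiset RTree} (hM : IsHuffPool r n M) :
    ∃ k, Multiset.card M + k * (r - 1) = n ∧
      M.map leaves = (huffmanMerge r)^[k] (Multiset.replicate n 1) := by
  induction hM with
  | refl => exact ⟨0, by simp, by simp [Multiset.map_replicate, leaves]⟩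
  | tail _ hstep ih =>
    obtain ⟨k, hcard, hmap⟩ := ih
    refine ⟨k + 1, ?_, ?_⟩
    · have := hstep.card_add_one
      rw [add_one_mul]
      omega
    · rw [Function.iterate_succ_apply', ← hmap, hstep.map_leaves]

theorem card_le (hr : 1 ≤ r) {M : Multiset RTree} (hM : IsHuffPool r n M) :
    Multiset.card M ≤ n := by
  obtain ⟨k, hk, -⟩ := hM.exists_iterate hr
  omega

theorem map_leaves_eq (hr : 2 ≤ r) {M M' : Multiset RTree} (hM : IsHuffPool r n M)
    (hM' : IsHuffPool r n M') (hcard : Multiset.card M = Multiset.card M') :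
    M.map leaves = M'.map leaves := by
  obtain ⟨k, hk, hmap⟩ := hM.exists_iterate (by omega)
  obtain ⟨k', hk', hmap'⟩ := hM'.exists_iterate (by omega)
  obtain rfl : k = k' := Nat.eq_of_mul_eq_mul_right (by omega : 0 < r - 1) (by omega)
  rw [hmap, hmap']

theorem of_le {M : Multiset RTree} (hM : IsHuffPool r n M) :
    ∀ {S}, S ≤ M → IsHuffPool r (S.map leaves).sum S := by
  classical
  induction hM with
  | refl =>
    intro S hS
    obtain ⟨m, -, rfl⟩ := Multiset.le_replicate_iff.1 hS
    rw [show (Multiset.replicate m RTree.leaf).map leaves = .replicate m 1 by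
      simp [Multiset.map_replicate, leaves], Multiset.sum_replicate, smul_eq_mul, mul_one]
    exact .refl
  | tail _ hstep ih =>
    obtain ⟨l, rest, hlen, hmin⟩ := hstep
    intro S hS
    by_cases hmem : RTree.node l ∈ S
    · -- `S` is reached by the same last merge, applied to `l` and the rest of `S`
      have hrest : S.erase (.node l) ≤ rest := by
        simpa using Multiset.erase_le_erase (RTree.node l) hS
      have hstep' : HuffStep r (l + S.erase (.node l)) (.node l ::ₘ S.erase (.node l)) :=
        .step l _ hlen fun a ha b hb => hmin a ha b (Multiset.mem_of_le hrest hb)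
      rw [← Multiset.cons_erase hmem]
      have := ih (add_le_add_right hrest _)
      simp only [Multiset.map_add, Multiset.map_coe, Multiset.sum_add, Multiset.sum_coe,
        ← leaves_node] at this
      rw [Multiset.map_cons, Multiset.sum_cons]
      exact this.tail hstep'
    · exact ih ((Multiset.le_cons_of_notMem hmem).1 hS |>.trans (Multiset.le_add_left _ _))

theorem isHTree_of_mem {M : Multiset RTree} (hM : IsHuffPool r n M) {t : RTree} (ht : t ∈ M) :
    IsHTree r (leaves t) t := by
  simpa [IsHuffPool, IsHTree] using hM.of_le (Multiset.singleton_le.2 ht)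

end IsHuffPool

theorem IsHTree.eq_leaf_or_node {T : RTree} (hT : IsHTree r n T) :
    (n = 1 ∧ T = .leaf) ∨
      ∃ l : List RTree, T = .node l ∧ l.length = r ∧ IsHuffPool r n l := by
  rcases Relation.ReflTransGen.cases_tail hT with h | ⟨M, hM, hstep⟩
  · obtain ⟨hcard, hleaf⟩ := Multiset.eq_replicate.1 h
    exact .inl ⟨by simpa using hcard.symm, hleaf T (Multiset.mem_singleton_self T)⟩
  · obtain ⟨l, hlen, rfl, rfl⟩ := hstep.eq_node_of_singleton
    exact .inr ⟨l, rfl, hlen, hM⟩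

theorem IsHTree.sameShape (hr : 2 ≤ r) {n : ℕ} {S T : RTree} (hS : IsHTree r n S)
    (hT : IsHTree r n T) : SameShape S T := by
  rcases hS.eq_leaf_or_node with ⟨hn, rfl⟩ | ⟨l, rfl, hlen, hl⟩ <;>
    rcases hT.eq_leaf_or_node with ⟨hn', rfl⟩ | ⟨l', rfl, hlen', hl'⟩
  · exact .leaf
  · exact absurd (hl'.card_le (by omega)) (by simp; omega)
  · exact absurd (hl.card_le (by omega)) (by simp; omega)
  · have hperm : (l.map leaves).Perm (l'.map leaves) := by
      simpa using hl.map_leaves_eq hr hl' (by simp [hlen, hlen'])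
    obtain ⟨l₂, hl₂, hperm₂⟩ := List.exists_forall₂_perm_of_perm_map hperm
      fun a ha b hb hab => (hl.isHTree_of_mem ha).sameShape hr
        (hab ▸ hl'.isHTree_of_mem hb)
    exact .node hl₂ hperm₂
termination_by sizeOf S
decreasing_by
  subst_vars
  have := List.sizeOf_lt_of_mem ha
  simp only [RTree.node.sizeOf_spec]
  omega

end RTree

open RTree in
theorem HTree_shape_unique_general (r : ℕ) (hr : 2 ≤ r) (n : ℕ) (S T : RTree)
    (hS : IsHTree r n S) (hT : IsHTree r n T) :
    SameShape S T :=
  hS.sameShape hr hT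

open RTree in
/-- For `n = w(r−1)+1` leaves (`w ≥ 1`) with the uniform all-ones weight
vector, the Huffman algorithm produces a unique tree shape: any two H-trees
have the same unlabeled topology. -/
theorem HTree_shape_unique (r : ℕ) (hr : 2 ≤ r) (w : ℕ) (hw : 1 ≤ w)
    (n : ℕ) (hn : n = w * (r - 1) + 1) (S T : RTree)
    (hS : IsHTree r n S) (hT : IsHTree r n T) :
    SameShape S T :=
  HTree_shape_unique_general r hr n S T hS hT
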